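/- arXiv:1806.02034 — 4 statements merged into one kernel-verified Lean document; each statement's English description precedes it below -/
import Mathlib

section
/- Stein's lemma for piecewise Lipschitz functions with finitely many discontinuities: Let X ~ N(μ, σ²) and let g : ℝ → ℝ be a function for which there exist finitely many points δ₁ < δ₂ < ... < δ_q such that g is Lipschitz on each open interval (-∞, δ₁), (δ₁, δ₂), ..., (δ_{q-1}, δ_q), (δ_q, ∞), and suppose the relevant expectations exist. Then (1/σ²)·E[(X-μ)·g(X)] = E[g'(X)] + Σ_{l=1}^{q} (lim_{γ↓δ_l} g(γ) − lim_{γ↑δ_l} g(γ)) · (1/(√(2π)σ))·exp(−(δ_l−μ)²/(2σ²)). -/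
/-!
With `p` the Gaussian density, `p' x = -((x - μ) / σ²) p x`, so the claim says
`∫ (g' p + g p') = ∑ₗ (g(δₗ⁻) - g(δₗ⁺)) p(δₗ)`. Off the jump points `g` is Lipschitz, hence
absolutely continuous, and integration by parts shows that `W t = ∫_{x ≤ t} (g' p + g p') - g t p t`
is constant on each component of `ℝ \ {δₗ}`. `W` tends to `0` at `-∞` and to `∫ (g' p + g p')` at
`+∞` (`g` grows at most linearly, so `g p → 0`), and it jumps by `(g(δₗ⁻) - g(δₗ⁺)) p(δₗ)` across
`δₗ`; summing the jumps gives the claim.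
-/

open MeasureTheory ProbabilityTheory Real Filter Topology Set
open scoped NNReal

theorem eq_of_tendsto_of_const_on {α β : Type*} [TopologicalSpace β] [T2Space β] {W : α → β}
    {s : Set α} (hW : ∀ x ∈ s, ∀ y ∈ s, W x = W y) {l₁ l₂ : Filter α} [l₁.NeBot] [l₂.NeBot]
    (h₁ : s ∈ l₁) (h₂ : s ∈ l₂) {a b : β} (ha : Tendsto W l₁ (𝓝 a))
    (hb : Tendsto W l₂ (𝓝 b)) : a = b := by
  obtain ⟨x₀, hx₀⟩ := Filter.nonempty_of_mem h₁
  have key : ∀ {l : Filter α} [l.NeBot] {c : β}, s ∈ l → Tendsto W l (𝓝 c) → c = W x₀ :=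
    fun hs hc => tendsto_nhds_unique hc
      (tendsto_const_nhds.congr' (eventually_of_mem hs fun y hy => hW x₀ hx₀ y hy))
  rw [key h₁ ha, key h₂ hb]

theorem Fin.sum_sub_eq_of_succ_eq_castSucc {M : Type*} [AddCommGroup M] {n : ℕ}
    (a b : Fin (n + 1) → M) (h : ∀ i : Fin n, a i.succ = b i.castSucc) :
    ∑ i, (b i - a i) = b (Fin.last n) - a 0 := by
  induction n with
  | zero => simp
  | succ n ih =>
    rw [Fin.sum_univ_castSucc, ih _ _ fun i => by simpa using h i.castSucc, ← Fin.succ_last,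
      h (Fin.last n)]
    simp only [Fin.castSucc_zero]
    abel

theorem lipschitzOnWith_of_abs_sub_le {g : ℝ → ℝ} {L : ℝ} {s : Set ℝ}
    (h : ∀ x ∈ s, ∀ y ∈ s, x ≤ y → |g y - g x| ≤ L * |y - x|) :
    LipschitzOnWith L.toNNReal g s := by
  refine LipschitzOnWith.of_dist_le' fun x hx y hy => ?_
  rw [dist_comm, Real.dist_eq, Real.dist_eq, abs_sub_comm x y]
  rcases le_total x y with hxy | hyx
  · exact h x hx y hy hxy
  · rw [abs_sub_comm, abs_sub_comm y x]
    exact h y hy x hx hyx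

theorem AbsolutelyContinuousOnInterval.integral_mul_eq_sub_of_hasDerivAt {f g f' g' : ℝ → ℝ}
    {a b : ℝ} (hf : AbsolutelyContinuousOnInterval f a b)
    (hg : AbsolutelyContinuousOnInterval g a b) (hf' : ∀ᵐ x, HasDerivAt f (f' x) x)
    (hg' : ∀ᵐ x, HasDerivAt g (g' x) x) :
    ∫ x in a..b, f' x * g x + f x * g' x = f b * g b - f a * g a := by
  rw [← hf.integral_deriv_mul_eq_sub hg]
  refine intervalIntegral.integral_congr_ae ?_
  filter_upwards [hf', hg'] with x hfx hgx _
  rw [hfx.deriv, hgx.deriv]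

theorem MeasureTheory.Integrable.continuous_integral_Iic {F : ℝ → ℝ} (hF : Integrable F) :
    Continuous fun t => ∫ x in Iic t, F x :=
  continuous_iff_continuousAt.2 fun t =>
    (hF.integrableOn.continuousOn_Iic_primitive_Iic (a₀ := t + 1)).continuousAt
      (Iic_mem_nhds (by linarith))

theorem MeasureTheory.Integrable.tendsto_integral_Iic_atTop {F : ℝ → ℝ} (hF : Integrable F) :
    Tendsto (fun t => ∫ x in Iic t, F x) atTop (𝓝 (∫ x, F x)) := by
  simpa using tendsto_setIntegral_of_monotone (fun _ => measurableSet_Iic)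
    (fun _ _ h => Iic_subset_Iic.2 h) hF.integrableOn

theorem sub_eq_sum_jumps_of_const_off_range {q : ℕ} {δ : Fin q → ℝ} (hδ : StrictMono δ)
    {W : ℝ → ℝ} (hW : ∀ s : Set ℝ, s.OrdConnected → (∀ l, δ l ∉ s) → ∀ x ∈ s, ∀ y ∈ s, W x = W y)
    {a b : ℝ} {wl wr : Fin q → ℝ} (ha : Tendsto W atBot (𝓝 a)) (hb : Tendsto W atTop (𝓝 b))
    (hwl : ∀ l, Tendsto W (𝓝[<] δ l) (𝓝 (wl l))) (hwr : ∀ l, Tendsto W (𝓝[>] δ l) (𝓝 (wr l))) :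
    b - a = ∑ l, (wr l - wl l) := by
  cases q with
  | zero =>
    simpa [sub_eq_zero] using
      eq_of_tendsto_of_const_on (hW univ ordConnected_univ (by simp)) univ_mem univ_mem hb ha
  | succ n =>
    have hfirst : wl 0 = a :=
      eq_of_tendsto_of_const_on (hW (Iio (δ 0)) ordConnected_Iio
        fun l hl => (hl : δ l < δ 0).not_ge (hδ.monotone (Fin.zero_le l)))
        self_mem_nhdsWithin (Iio_mem_atBot _) (hwl 0) ha
    have hlast : wr (Fin.last n) = b :=
      eq_of_tendsto_of_const_on (hW (Ioi _) ordConnected_Ioi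
        fun l hl => (hl : δ (Fin.last n) < δ l).not_ge (hδ.monotone (Fin.le_last l)))
        self_mem_nhdsWithin (Ioi_mem_atTop _) (hwr _) hb
    have hmid : ∀ i : Fin n, wl i.succ = wr i.castSucc := fun i =>
      eq_of_tendsto_of_const_on (hW (Ioo (δ i.castSucc) (δ i.succ)) ordConnected_Ioo
        fun l hl => by
          rw [mem_Ioo, hδ.lt_iff_lt, hδ.lt_iff_lt, Fin.castSucc_lt_iff_succ_le] at hl
          exact hl.1.not_gt hl.2)
        (Ioo_mem_nhdsLT (hδ (Fin.castSucc_lt_succ (i := i))))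
        (Ioo_mem_nhdsGT (hδ (Fin.castSucc_lt_succ (i := i)))) (hwl _) (hwr _)
    rw [Fin.sum_sub_eq_of_succ_eq_castSucc wl wr hmid, hfirst, hlast]

theorem integral_deriv_mul_eq_sum_jumps {q : ℕ} {δ : Fin q → ℝ} (hδ : StrictMono δ)
    {g g' p p' : ℝ → ℝ}
    (hg : ∀ a b, a ≤ b → (∀ l, δ l ∉ Icc a b) → AbsolutelyContinuousOnInterval g a b)
    (hg' : ∀ᵐ x, HasDerivAt g (g' x) x) (hp : ∀ x, HasDerivAt p (p' x) x)
    (hp' : Continuous p') {gp gm : Fin q → ℝ}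
    (hgp : ∀ l, Tendsto g (𝓝[>] δ l) (𝓝 (gp l))) (hgm : ∀ l, Tendsto g (𝓝[<] δ l) (𝓝 (gm l)))
    (hbot : Tendsto (fun x => g x * p x) atBot (𝓝 0))
    (htop : Tendsto (fun x => g x * p x) atTop (𝓝 0))
    (hF : Integrable fun x => g' x * p x + g x * p' x) :
    ∫ x, g' x * p x + g x * p' x = ∑ l, (gm l - gp l) * p (δ l) := by
  set F := fun x => g' x * p x + g x * p' x
  set S := fun t => ∫ x in Iic t, F x
  have hpc : Continuous p := continuous_iff_continuousAt.2 fun x => (hp x).continuousAt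
  have hpac : ∀ a b, AbsolutelyContinuousOnInterval p a b := fun a b =>
    ContDiffOn.absolutelyContinuousOnInterval
      (contDiff_one_iff_deriv.2 ⟨fun x => (hp x).differentiableAt,
        (funext fun x => (hp x).deriv) ▸ hp'⟩).contDiffOn
  have hconst : ∀ s : Set ℝ, s.OrdConnected → (∀ l, δ l ∉ s) →
      ∀ x ∈ s, ∀ y ∈ s, S x - g x * p x = S y - g y * p y := by
    intro s hs hδs x hx y hy
    wlog hxy : x ≤ y generalizing x y
    · exact (this y hy x hx (le_of_not_ge hxy)).symm
    have hS : S y - S x = ∫ t in x..y, F t :=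
      intervalIntegral.integral_Iic_sub_Iic hF.integrableOn hF.integrableOn
    have := (hg x y hxy fun l hl => hδs l (hs.out hx hy hl)).integral_mul_eq_sub_of_hasDerivAt
      (hpac x y) hg' (Eventually.of_forall hp)
    linarith
  have hS : Continuous S := hF.continuous_integral_Iic
  have := sub_eq_sum_jumps_of_const_off_range hδ hconst
    (by simpa using (tendsto_integral_Iic_zero (f := F) tendsto_id).sub hbot)
    (by simpa using hF.tendsto_integral_Iic_atTop.sub htop)
    (fun l => hS.continuousWithinAt.tendsto.sub ((hgm l).mul hpc.continuousWithinAt.tendsto))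
    (fun l => hS.continuousWithinAt.tendsto.sub ((hgp l).mul hpc.continuousWithinAt.tendsto))
  rw [sub_zero] at this
  exact this.trans <| Finset.sum_congr rfl fun l _ => by ring

namespace ProbabilityTheory

theorem gaussianPDFReal_sq (μ : ℝ) (σ : ℝ≥0) (x : ℝ) :
    gaussianPDFReal μ (σ ^ 2) x = 1 / (√(2 * π) * σ) * exp (-(x - μ) ^ 2 / (2 * (σ : ℝ) ^ 2)) := by
  rw [gaussianPDFReal, NNReal.coe_pow, sqrt_mul (by positivity), sqrt_sq σ.coe_nonneg, one_div]

theorem integrable_gaussianReal_iff {μ : ℝ} {v : ℝ≥0} (hv : v ≠ 0) {f : ℝ → ℝ} :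
    Integrable f (gaussianReal μ v) ↔ Integrable fun x => f x * gaussianPDFReal μ v x := by
  rw [gaussianReal_of_var_ne_zero _ hv, integrable_withDensity_iff_integrable_smul'
    (measurable_gaussianPDF μ v) (ae_of_all _ fun _ => gaussianPDF_lt_top)]
  simp only [toReal_gaussianPDF, smul_eq_mul, mul_comm]

theorem integral_gaussianReal_eq_integral_mul {μ : ℝ} {v : ℝ≥0} (hv : v ≠ 0) (f : ℝ → ℝ) :
    ∫ x, f x ∂gaussianReal μ v = ∫ x, f x * gaussianPDFReal μ v x := by
  simp only [integral_gaussianReal_eq_integral_smul hv, smul_eq_mul, mul_comm]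

theorem hasDerivAt_gaussianPDFReal (μ : ℝ) (v : ℝ≥0) (x : ℝ) :
    HasDerivAt (gaussianPDFReal μ v) (-((x - μ) / v) * gaussianPDFReal μ v x) x := by
  have h : HasDerivAt (fun x => -(x - μ) ^ 2 / (2 * v)) (-((x - μ) / v)) x := by
    refine ((((hasDerivAt_id' x).sub_const μ).fun_pow 2).neg.div_const (2 * (v : ℝ))).congr_deriv ?_
    norm_num
    rw [neg_div, mul_div_mul_left _ _ two_ne_zero]
  refine (h.exp.const_mul (√(2 * π * v))⁻¹).congr_deriv ?_
  rw [gaussianPDFReal]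
  ring

theorem continuous_gaussianPDFReal (μ : ℝ) (v : ℝ≥0) : Continuous (gaussianPDFReal μ v) :=
  continuous_iff_continuousAt.2 fun x => (hasDerivAt_gaussianPDFReal μ v x).continuousAt

theorem tendsto_rpow_abs_sub_mul_gaussianPDFReal (μ : ℝ) (v : ℝ≥0) (s : ℝ) :
    Tendsto (fun x => |x - μ| ^ s * gaussianPDFReal μ v x) (cocompact ℝ) (𝓝 0) := by
  rcases eq_or_ne v 0 with rfl | hv
  · simp
  have hshift : Tendsto (fun x : ℝ => x - μ) (cocompact ℝ) (cocompact ℝ) :=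
    (Homeomorph.subRight μ).isClosedEmbedding.tendsto_cocompact
  have := ((tendsto_rpow_abs_mul_exp_neg_mul_sq_cocompact (a := (2 * v : ℝ)⁻¹)
    (by positivity) s).comp hshift).const_mul (√(2 * π * v))⁻¹
  rw [mul_zero] at this
  refine this.congr fun x => ?_
  simp only [Function.comp_apply, gaussianPDFReal]
  ring_nf

theorem _root_.LipschitzOnWith.tendsto_mul_gaussianPDFReal {μ : ℝ} {v : ℝ≥0} {g : ℝ → ℝ} {K : ℝ≥0}
    {s : Set ℝ} {x₀ : ℝ} (hg : LipschitzOnWith K g s) (hx₀ : x₀ ∈ s) {l : Filter ℝ}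
    (hs : s ∈ l) (hl : l ≤ cocompact ℝ) :
    Tendsto (fun x => g x * gaussianPDFReal μ v x) l (𝓝 0) := by
  set p := gaussianPDFReal μ v
  set C := |g x₀| + K * |μ - x₀|
  have hbound : ∀ x ∈ s, ‖g x * p x‖ ≤ C * p x + K * (|x - μ| * p x) := by
    intro x hx
    have hgx : |g x - g x₀| ≤ K * |x - x₀| := by
      simpa [Real.dist_eq] using hg.dist_le_mul x hx x₀ hx₀
    have hK := mul_le_mul_of_nonneg_left (abs_sub_le x μ x₀) K.coe_nonneg
    have hgrowth : |g x| ≤ C + K * |x - μ| := by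
      linarith [abs_sub_abs_le_abs_sub (g x) (g x₀)]
    calc ‖g x * p x‖ = |g x| * p x := by
          rw [norm_mul, Real.norm_of_nonneg (gaussianPDFReal_nonneg μ v x), Real.norm_eq_abs]
      _ ≤ (C + K * |x - μ|) * p x :=
          mul_le_mul_of_nonneg_right hgrowth (gaussianPDFReal_nonneg μ v x)
      _ = C * p x + K * (|x - μ| * p x) := by ring
  have hdecay (t : ℝ) : Tendsto (fun x => |x - μ| ^ t * p x) l (𝓝 0) :=
    (tendsto_rpow_abs_sub_mul_gaussianPDFReal μ v t).mono_left hl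
  have hlim := ((hdecay 0).const_mul C).add ((hdecay 1).const_mul (K : ℝ))
  simp only [rpow_zero, one_mul, rpow_one, mul_zero, add_zero] at hlim
  exact squeeze_zero_norm' (eventually_of_mem hs hbound) hlim

theorem integral_sub_mul_gaussianReal_eq_sum_jumps {μ : ℝ} {v : ℝ≥0} (hv : v ≠ 0) {q : ℕ}
    {δ : Fin q → ℝ} (hδ : StrictMono δ) {g g' : ℝ → ℝ} {K : ℝ≥0}
    (hg : ∀ s : Set ℝ, s.OrdConnected → (∀ l, δ l ∉ s) → LipschitzOnWith K g s)
    {gp gm : Fin q → ℝ} (hgp : ∀ l, Tendsto g (𝓝[>] δ l) (𝓝 (gp l)))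
    (hgm : ∀ l, Tendsto g (𝓝[<] δ l) (𝓝 (gm l)))
    (hg' : ∀ᵐ x ∂gaussianReal μ v, HasDerivAt g (g' x) x)
    (hint1 : Integrable g' (gaussianReal μ v))
    (hint2 : Integrable (fun x => (x - μ) * g x) (gaussianReal μ v)) :
    (v : ℝ)⁻¹ * ∫ x, (x - μ) * g x ∂gaussianReal μ v =
      ∫ x, g' x ∂gaussianReal μ v + ∑ l, (gp l - gm l) * gaussianPDFReal μ v (δ l) := by
  set p := gaussianPDFReal μ v
  have hint1' := (integrable_gaussianReal_iff hv).1 hint1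
  have hint2' := ((integrable_gaussianReal_iff hv).1 hint2).const_mul (v : ℝ)⁻¹
  have hF : (fun x => g' x * p x + g x * (-((x - μ) / v) * p x)) =
      fun x => g' x * p x - (v : ℝ)⁻¹ * ((x - μ) * g x * p x) := by
    funext x
    ring
  obtain ⟨b₁, hb₁⟩ := (finite_range δ).bddBelow
  obtain ⟨b₂, hb₂⟩ := (finite_range δ).bddAbove
  have hbot : Tendsto (fun x => g x * p x) atBot (𝓝 0) :=
    (hg (Iio b₁) ordConnected_Iio fun l hl => (hl : δ l < b₁).not_ge (hb₁ ⟨l, rfl⟩)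
      ).tendsto_mul_gaussianPDFReal (x₀ := b₁ - 1) (by simp) (Iio_mem_atBot b₁) atBot_le_cocompact
  have htop : Tendsto (fun x => g x * p x) atTop (𝓝 0) :=
    (hg (Ioi b₂) ordConnected_Ioi fun l hl => (hl : b₂ < δ l).not_ge (hb₂ ⟨l, rfl⟩)
      ).tendsto_mul_gaussianPDFReal (x₀ := b₂ + 1) (by simp) (Ioi_mem_atTop b₂) atTop_le_cocompact
  have hjump := integral_deriv_mul_eq_sum_jumps hδ
    (fun a b hab hfree => (hg (uIcc a b) ordConnected_uIcc
      (by rwa [uIcc_of_le hab])).absolutelyContinuousOnInterval)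
    ((gaussianReal_absolutelyContinuous' μ hv).ae_le hg') (hasDerivAt_gaussianPDFReal μ v)
    (((continuous_id.sub continuous_const).div_const _).neg.mul (continuous_gaussianPDFReal μ v))
    hgp hgm hbot htop (hF ▸ hint1'.sub hint2')
  rw [hF, integral_sub hint1' hint2', integral_const_mul] at hjump
  rw [integral_gaussianReal_eq_integral_mul hv, integral_gaussianReal_eq_integral_mul hv]
  have hneg : ∑ l, (gp l - gm l) * p (δ l) = -∑ l, (gm l - gp l) * p (δ l) := by
    rw [← Finset.sum_neg_distrib]
    exact Finset.sum_congr rfl fun l _ => by ring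
  linarith

end ProbabilityTheory

theorem stmt2_general (μ : ℝ) (σ : NNReal) (hσ : 0 < σ) (q : ℕ)
    (δ : Fin q → ℝ) (hδ : StrictMono δ) (g g' : ℝ → ℝ) (L : ℝ)
    (hLip : ∀ x y : ℝ, x ≤ y → (∀ l : Fin q, δ l ∉ Set.Icc x y) →
      |g y - g x| ≤ L * |y - x|)
    (gp gm : Fin q → ℝ)
    (hgp : ∀ l : Fin q,
      Filter.Tendsto g (nhdsWithin (δ l) (Set.Ioi (δ l))) (nhds (gp l)))
    (hgm : ∀ l : Fin q,
      Filter.Tendsto g (nhdsWithin (δ l) (Set.Iio (δ l))) (nhds (gm l)))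
    (hderiv : ∀ᵐ x ∂(gaussianReal μ (σ ^ 2)), HasDerivAt g (g' x) x)
    (hint1 : Integrable g' (gaussianReal μ (σ ^ 2)))
    (hint2 : Integrable (fun x => (x - μ) * g x) (gaussianReal μ (σ ^ 2))) :
    (1 / (σ : ℝ) ^ 2) * ∫ x, (x - μ) * g x ∂(gaussianReal μ (σ ^ 2)) =
      (∫ x, g' x ∂(gaussianReal μ (σ ^ 2))) +
        ∑ l : Fin q, (gp l - gm l) * (1 / (Real.sqrt (2 * π) * σ)) *
          Real.exp (-(δ l - μ) ^ 2 / (2 * (σ : ℝ) ^ 2)) := by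
  have hv : σ ^ 2 ≠ 0 := pow_ne_zero 2 hσ.ne'
  have key := integral_sub_mul_gaussianReal_eq_sum_jumps hv hδ
    (fun s hs hδs => lipschitzOnWith_of_abs_sub_le fun x hx y hy hxy =>
      hLip x y hxy fun l hl => hδs l (hs.out hx hy hl)) hgp hgm hderiv hint1 hint2
  simpa [gaussianPDFReal_sq, mul_assoc] using key

/-- Stein's lemma for piecewise Lipschitz functions with finitely many
jump discontinuities `δ 0 < δ 1 < ... < δ (q-1)`. -/
theorem stmt2 (μ : ℝ) (σ : NNReal) (hσ : 0 < σ) (q : ℕ) (hq : 0 < q)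
    (δ : Fin q → ℝ) (hδ : StrictMono δ) (g g' : ℝ → ℝ) (L : ℝ) (hL : 0 ≤ L)
    (hLip : ∀ x y : ℝ, x ≤ y → (∀ l : Fin q, δ l ∉ Set.Icc x y) →
      |g y - g x| ≤ L * |y - x|)
    (gp gm : Fin q → ℝ)
    (hgp : ∀ l : Fin q,
      Filter.Tendsto g (nhdsWithin (δ l) (Set.Ioi (δ l))) (nhds (gp l)))
    (hgm : ∀ l : Fin q,
      Filter.Tendsto g (nhdsWithin (δ l) (Set.Iio (δ l))) (nhds (gm l)))
    (hderiv : ∀ᵐ x ∂(gaussianReal μ (σ ^ 2)), HasDerivAt g (g' x) x)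
    (hint1 : Integrable g' (gaussianReal μ (σ ^ 2)))
    (hint2 : Integrable (fun x => (x - μ) * g x) (gaussianReal μ (σ ^ 2))) :
    (1 / (σ : ℝ) ^ 2) * ∫ x, (x - μ) * g x ∂(gaussianReal μ (σ ^ 2)) =
      (∫ x, g' x ∂(gaussianReal μ (σ ^ 2))) +
        ∑ l : Fin q, (gp l - gm l) * (1 / (Real.sqrt (2 * π) * σ)) *
          Real.exp (-(δ l - μ) ^ 2 / (2 * (σ : ℝ) ^ 2)) :=
  stmt2_general μ σ hσ q δ hδ g g' L hLip gp gm hgp hgm hderiv hint1 hint2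
end

section
/- Bound on jump sizes of the k-means model: if a discontinuity of the fitted value M(X + γe_{i,j})_{i,j} occurs at γ = δ, then the absolute size of the jump satisfies |lim_{γ↓δ}M(X+γe_{i,j})_{i,j} − lim_{γ↑δ}M(X+γe_{i,j})_{i,j}| ≤ Diam(X) + C|δ|, where Diam(X) is the diameter of the set of rows of X and C is a constant independent of X. -/
open Finset

lemma coord_dist_le {d : ℕ} (x y : EuclideanSpace ℝ (Fin d)) (j : Fin d) :
    |x j - y j| ≤ dist x y := by
  rw [EuclideanSpace.dist_eq]
  have h1 : |x j - y j| = Real.sqrt ((x j - y j) ^ 2) := (Real.sqrt_sq_eq_abs _).symm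
  rw [h1]
  apply Real.sqrt_le_sqrt
  have := Finset.single_le_sum (f := fun i => (x i - y i) ^ 2)
    (fun i _ => sq_nonneg _) (Finset.mem_univ j)
  simpa [Real.dist_eq, sq_abs] using this

lemma mean_sub_mean_le {n d : ℕ} (X : Fin n → EuclideanSpace ℝ (Fin d)) (j : Fin d)
    (S1 S2 : Finset (Fin n)) (h1 : S1.Nonempty) (h2 : S2.Nonempty) :
    (∑ m ∈ S1, X m j) / (S1.card : ℝ) - (∑ m ∈ S2, X m j) / (S2.card : ℝ)
      ≤ Metric.diam (Set.range X) := by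
  obtain ⟨m0, hm0, hmax⟩ := S1.exists_max_image (fun m => X m j) h1
  obtain ⟨m1, hm1, hmin⟩ := S2.exists_min_image (fun m => X m j) h2
  have c1 : (0:ℝ) < S1.card := by exact_mod_cast Finset.card_pos.mpr h1
  have c2 : (0:ℝ) < S2.card := by exact_mod_cast Finset.card_pos.mpr h2
  have hA : (∑ m ∈ S1, X m j) / (S1.card : ℝ) ≤ X m0 j := by
    rw [div_le_iff₀ c1]
    calc ∑ m ∈ S1, X m j ≤ ∑ _m ∈ S1, X m0 j :=
          Finset.sum_le_sum (fun m hm => hmax m hm)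
      _ = X m0 j * S1.card := by rw [Finset.sum_const, nsmul_eq_mul, mul_comm]
  have hB : X m1 j ≤ (∑ m ∈ S2, X m j) / (S2.card : ℝ) := by
    rw [le_div_iff₀ c2]
    calc X m1 j * S2.card = ∑ _m ∈ S2, X m1 j := by
          rw [Finset.sum_const, nsmul_eq_mul, mul_comm]
      _ ≤ ∑ m ∈ S2, X m j := Finset.sum_le_sum (fun m hm => hmin m hm)
  have hd : X m0 j - X m1 j ≤ Metric.diam (Set.range X) := by
    calc X m0 j - X m1 j ≤ |X m0 j - X m1 j| := le_abs_self _
      _ ≤ dist (X m0) (X m1) := coord_dist_le _ _ _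
      _ ≤ Metric.diam (Set.range X) :=
          Metric.dist_le_diam_of_mem ((Set.finite_range X).isBounded)
            (Set.mem_range_self _) (Set.mem_range_self _)
  linarith

/-- Bound on jump sizes of the k-means model: the two one-sided limits of the
fitted value at a discontinuity are means (over subsets of data points) of the
`j`-th coordinates of the perturbed rows, so the jump size is at most
`Diam(X) + C|δ|` for a constant `C` independent of `X`. -/
theorem stmt9 (n d : ℕ) :
    ∃ C : ℝ, ∀ (X : Fin n → EuclideanSpace ℝ (Fin d)) (i : Fin n) (j : Fin d)
      (δ : ℝ) (S1 S2 : Finset (Fin n)), S1.Nonempty → S2.Nonempty →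
      |((∑ m ∈ S1, (X m j + if m = i then δ else 0)) / (S1.card : ℝ))
        - ((∑ m ∈ S2, (X m j + if m = i then δ else 0)) / (S2.card : ℝ))|
      ≤ Metric.diam (Set.range X) + C * |δ| := by
  refine ⟨2, fun X i j δ S1 S2 h1 h2 => ?_⟩
  have c1 : (0:ℝ) < S1.card := by exact_mod_cast Finset.card_pos.mpr h1
  have c2 : (0:ℝ) < S2.card := by exact_mod_cast Finset.card_pos.mpr h2
  set A1 := (∑ m ∈ S1, X m j) / (S1.card : ℝ)
  set A2 := (∑ m ∈ S2, X m j) / (S2.card : ℝ)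
  set B1 := (∑ m ∈ S1, (if m = i then δ else 0)) / (S1.card : ℝ)
  set B2 := (∑ m ∈ S2, (if m = i then δ else 0)) / (S2.card : ℝ)
  have hsplit : ∀ (S : Finset (Fin n)),
      (∑ m ∈ S, (X m j + if m = i then δ else 0)) / (S.card : ℝ)
      = (∑ m ∈ S, X m j) / (S.card : ℝ)
        + (∑ m ∈ S, (if m = i then δ else 0)) / (S.card : ℝ) := by
    intro S
    rw [Finset.sum_add_distrib, add_div]
  rw [hsplit S1, hsplit S2]
  have hB : ∀ (S : Finset (Fin n)), S.Nonempty →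
      |(∑ m ∈ S, (if m = i then δ else 0)) / (S.card : ℝ)| ≤ |δ| := by
    intro S hS
    have cS : (0:ℝ) < S.card := by exact_mod_cast Finset.card_pos.mpr hS
    have hsum : |∑ m ∈ S, (if m = i then δ else 0)| ≤ |δ| := by
      rw [Finset.sum_ite_eq' S i (fun _ => δ)]
      split <;> simp [abs_nonneg]
    rw [abs_div, abs_of_pos cS, div_le_iff₀ cS]
    have hc : (1:ℝ) ≤ S.card := by exact_mod_cast Finset.card_pos.mpr hS
    nlinarith [abs_nonneg δ]
  have hAB : |A1 - A2| ≤ Metric.diam (Set.range X) := by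
    rw [abs_sub_le_iff]
    exact ⟨mean_sub_mean_le X j S1 S2 h1 h2, mean_sub_mean_le X j S2 S1 h2 h1⟩
  have h3 := hB S1 h1
  have h4 := hB S2 h2
  calc |A1 + B1 - (A2 + B2)| = |(A1 - A2) + (B1 - B2)| := by ring_nf
    _ ≤ |A1 - A2| + |B1 - B2| := abs_add_le _ _
    _ ≤ |A1 - A2| + (|B1| + |B2|) := by linarith [abs_sub B1 B2]
    _ ≤ Metric.diam (Set.range X) + 2 * |δ| := by linarith
end

section
/- Finiteness of the k-means discontinuity set: for fixed n and k, as the entry X_{i,j} varies over ℝ with all other entries of X fixed, the number of points at which the k-means fitted value M(X)_{i,j} is discontinuous is bounded by a constant A depending only on n and k (not on i, j, or the fixed entries), since there are only finitely many distinct partitions of n points into at most k clusters. -/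
open Finset

/-- The within-cluster sum of squares of a clustering `(c, μ)` of the rows
`Y` of a data matrix. -/
noncomputable def kmObj (n d k : ℕ) (Y : Fin n → EuclideanSpace ℝ (Fin d))
    (c : Fin n → Fin k) (μ : Fin k → EuclideanSpace ℝ (Fin d)) : ℝ :=
  ∑ m : Fin n, ‖Y m - μ (c m)‖ ^ 2

/-- The data matrix `X` with entry `(i, j)` replaced by `t`. -/
noncomputable def perturbEntry (n d : ℕ) (X : Fin n → EuclideanSpace ℝ (Fin d))
    (i : Fin n) (j : Fin d) (t : ℝ) : Fin n → EuclideanSpace ℝ (Fin d) :=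
  fun m => X m + (if m = i then (t - X i j) • EuclideanSpace.single j (1 : ℝ) else 0)

/-!
For a fixed clustering `c`, moving the entry `X i j = t` changes only the cluster of `i`, whose
centroid moves affinely in `t`; hence the within-cluster sum of squares `W_c(t)` is a quadratic
polynomial in `t`, and the fitted value `t - W_c'(t) / 2` is determined by `W_c`. Away from the
finitely many points where two distinct polynomials `W_c`, `W_c'` cross, every clustering optimal
near `t₀` has the same `W_c` as one optimal at `t₀`, so any selection of the fitted value agrees
near `t₀` with a single affine function.
-/

open Polynomial
open scoped RealInnerProductSpace

theorem continuousAt_of_argmin_selection {ι α β γ : Type*} [Finite ι] [TopologicalSpace α]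
    [TopologicalSpace β] [LinearOrder γ] [TopologicalSpace γ] [OrderClosedTopology γ]
    {G : ι → α → γ} {φ : ι → α → β} {f : α → β} {t₀ : α}
    (hG : ∀ c, ContinuousAt (G c) t₀) (hφ : ∀ c, ContinuousAt (φ c) t₀)
    (hGφ : ∀ c c', G c = G c' → φ c = φ c')
    (hf : ∀ t, ∃ c, (∀ c', G c t ≤ G c' t) ∧ f t = φ c t)
    (ht₀ : ∀ c c', G c t₀ = G c' t₀ → G c = G c') :
    ContinuousAt f t₀ := by
  obtain ⟨c₀, hmin₀, -⟩ := hf t₀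
  have hstrict : ∀ᶠ t in nhds t₀, ∀ c, G c₀ t₀ < G c t₀ → G c₀ t < G c t :=
    Filter.eventually_all.2 fun c =>
      if hc : G c₀ t₀ < G c t₀ then ((hG c₀).eventually_lt (hG c) hc).mono fun _ h _ => h
      else .of_forall fun _ h => absurd h hc
  have hfφ : f =ᶠ[nhds t₀] φ c₀ := by
    filter_upwards [hstrict] with t ht
    obtain ⟨c, hmin, hft⟩ := hf t
    have htie : G c t₀ = G c₀ t₀ :=
      le_antisymm (not_lt.1 fun hlt => (ht c hlt).not_ge (hmin c₀)) (hmin₀ c)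
    rw [hft, hGφ c c₀ (ht₀ c c₀ htie)]
  exact (hφ c₀).congr hfφ.symm

section Crossings

variable {R ι : Type*} [CommRing R] [IsDomain R]

def crossings (G : ι → R[X]) : Set R :=
  {t | ∃ c c', G c ≠ G c' ∧ (G c).eval t = (G c').eval t}

theorem crossings_finite_and_ncard_le [Fintype ι] (G : ι → R[X]) {D : ℕ}
    (hG : ∀ c, (G c).natDegree ≤ D) :
    (crossings G).Finite ∧ (crossings G).ncard ≤ Fintype.card ι ^ 2 * D := by
  classical
  set pairs := univ.filter fun p : ι × ι => G p.1 ≠ G p.2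
  have hS : crossings G = ↑(pairs.biUnion fun p => (G p.1 - G p.2).roots.toFinset) := by
    ext t
    simp [pairs, crossings, sub_eq_zero]
  rw [hS, Set.ncard_coe_finset]
  refine ⟨finite_toSet _, ?_⟩
  have hroots : ∀ p : ι × ι, #(G p.1 - G p.2).roots.toFinset ≤ D := fun p =>
    calc #(G p.1 - G p.2).roots.toFinset ≤ (G p.1 - G p.2).natDegree :=
          (Multiset.toFinset_card_le _).trans (card_roots' _)
      _ ≤ D := (natDegree_sub_le _ _).trans (max_le (hG _) (hG _))
  calc #(pairs.biUnion fun p => (G p.1 - G p.2).roots.toFinset)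
      ≤ ∑ p ∈ pairs, #(G p.1 - G p.2).roots.toFinset := card_biUnion_le
    _ ≤ ∑ _p ∈ pairs, D := sum_le_sum fun p _ => hroots p
    _ = #pairs * D := by rw [sum_const, smul_eq_mul]
    _ ≤ Fintype.card ι ^ 2 * D := by
        gcongr
        exact (card_filter_le _ _).trans_eq (by simp [sq])

theorem setOf_not_continuousAt_subset_crossings [Finite ι] [TopologicalSpace R]
    [IsTopologicalRing R] [LinearOrder R] [OrderClosedTopology R] [Infinite R]
    (G : ι → R[X]) (Φ : R[X] → R[X]) {f : R → R}
    (hf : ∀ t, ∃ c, (∀ c', (G c).eval t ≤ (G c').eval t) ∧ f t = (Φ (G c)).eval t) :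
    {t | ¬ContinuousAt f t} ⊆ crossings G := by
  intro t₀ hdisc
  by_contra hcross
  refine hdisc (continuousAt_of_argmin_selection (G := fun c t => (G c).eval t)
    (fun c => (G c).continuousAt) (fun c => (Φ (G c)).continuousAt) (fun c c' h => ?_) hf
    fun c c' htie => ?_)
  · rw [Polynomial.funext (congrFun h)]
  · by_contra hne
    exact hcross ⟨c, c', fun h => hne (by rw [h]), htie⟩

end Crossings

namespace KMeans

variable {n d k : ℕ}

noncomputable def centroid (Y : Fin n → EuclideanSpace ℝ (Fin d)) (c : Fin n → Fin k)
    (l : Fin k) : EuclideanSpace ℝ (Fin d) :=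
  (#{m | c m = l} : ℝ)⁻¹ • ∑ m with c m = l, Y m

noncomputable def wcss (Y : Fin n → EuclideanSpace ℝ (Fin d)) (c : Fin n → Fin k) : ℝ :=
  kmObj n d k Y c (centroid Y c)

theorem sum_fiber_eq_card_smul_centroid (Y : Fin n → EuclideanSpace ℝ (Fin d))
    (c : Fin n → Fin k) (l : Fin k) :
    ∑ m with c m = l, Y m = (#{m | c m = l} : ℝ) • centroid Y c l := by
  rcases eq_or_ne #{m | c m = l} 0 with h | h
  · rw [card_eq_zero] at h
    simp [h]
  · rw [centroid, smul_inv_smul₀ (Nat.cast_ne_zero.2 h)]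

theorem kmObj_eq_wcss_add (Y : Fin n → EuclideanSpace ℝ (Fin d)) (c : Fin n → Fin k)
    (μ : Fin k → EuclideanSpace ℝ (Fin d)) :
    kmObj n d k Y c μ = wcss Y c + ∑ m, ‖centroid Y c (c m) - μ (c m)‖ ^ 2 := by
  unfold wcss
  set ν := centroid Y c
  have hcross : ∑ m, ⟪Y m - ν (c m), ν (c m) - μ (c m)⟫ = 0 := by
    rw [← sum_fiberwise univ c]
    refine sum_eq_zero fun l _ => ?_
    rw [sum_congr rfl fun m hm => by rw [(mem_filter.1 hm).2], ← sum_inner, sum_sub_distrib,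
      sum_const, sum_fiber_eq_card_smul_centroid, ← Nat.cast_smul_eq_nsmul ℝ, sub_self,
      inner_zero_left]
  have hterm : ∀ m, ‖Y m - μ (c m)‖ ^ 2 = ‖Y m - ν (c m)‖ ^ 2
      + 2 * ⟪Y m - ν (c m), ν (c m) - μ (c m)⟫ + ‖ν (c m) - μ (c m)‖ ^ 2 := fun m => by
    rw [← norm_add_sq_real, sub_add_sub_cancel]
  simp only [kmObj, hterm, sum_add_distrib, ← mul_sum, hcross, mul_zero, add_zero]

theorem wcss_le_kmObj (Y : Fin n → EuclideanSpace ℝ (Fin d)) (c : Fin n → Fin k)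
    (μ : Fin k → EuclideanSpace ℝ (Fin d)) : wcss Y c ≤ kmObj n d k Y c μ := by
  rw [kmObj_eq_wcss_add]
  exact le_add_of_nonneg_right (sum_nonneg fun _ _ => sq_nonneg _)

theorem wcss_le_of_forall_kmObj_le {Y : Fin n → EuclideanSpace ℝ (Fin d)} {c : Fin n → Fin k}
    {μ : Fin k → EuclideanSpace ℝ (Fin d)}
    (hopt : ∀ c' μ', kmObj n d k Y c μ ≤ kmObj n d k Y c' μ') (c' : Fin n → Fin k) :
    wcss Y c ≤ wcss Y c' :=
  (wcss_le_kmObj Y c μ).trans (hopt c' _)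

theorem eq_centroid_of_forall_kmObj_le {Y : Fin n → EuclideanSpace ℝ (Fin d)}
    {c : Fin n → Fin k} {μ : Fin k → EuclideanSpace ℝ (Fin d)}
    (hopt : ∀ μ', kmObj n d k Y c μ ≤ kmObj n d k Y c μ') (m : Fin n) :
    μ (c m) = centroid Y c (c m) := by
  have hzero : ∑ m, ‖centroid Y c (c m) - μ (c m)‖ ^ 2 = 0 := by
    have := hopt (centroid Y c)
    rw [kmObj_eq_wcss_add] at this
    exact le_antisymm (by rwa [wcss, add_le_iff_nonpos_right] at this)
      (sum_nonneg fun _ _ => sq_nonneg _)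
  rw [sum_eq_zero_iff_of_nonneg fun _ _ => sq_nonneg _] at hzero
  rw [eq_comm, ← sub_eq_zero, ← norm_eq_zero, ← sq_eq_zero_iff]
  exact hzero m (mem_univ m)

theorem centroid_add_single (Y : Fin n → EuclideanSpace ℝ (Fin d)) (c : Fin n → Fin k)
    (i : Fin n) (v : EuclideanSpace ℝ (Fin d)) (l : Fin k) :
    centroid (Y + Pi.single i v) c l =
      centroid Y c l + if c i = l then (#{m | c m = l} : ℝ)⁻¹ • v else 0 := by
  simp only [centroid, Pi.add_apply, sum_add_distrib, sum_pi_single', mem_filter, mem_univ,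
    true_and, smul_add]
  split_ifs <;> simp

theorem kmObj_add_single (Y : Fin n → EuclideanSpace ℝ (Fin d)) (c : Fin n → Fin k)
    (μ : Fin k → EuclideanSpace ℝ (Fin d)) (i : Fin n) (v : EuclideanSpace ℝ (Fin d)) :
    kmObj n d k (Y + Pi.single i v) c μ =
      kmObj n d k Y c μ + 2 * ⟪Y i - μ (c i), v⟫ + ‖v‖ ^ 2 := by
  have hterm : ∀ m, ‖(Y + Pi.single i v : Fin n → EuclideanSpace ℝ (Fin d)) m - μ (c m)‖ ^ 2 =
      ‖Y m - μ (c m)‖ ^ 2 + (Pi.single i (2 * ⟪Y i - μ (c i), v⟫ + ‖v‖ ^ 2) : Fin n → ℝ) m := fun m => by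
    rcases eq_or_ne m i with rfl | hm
    · rw [Pi.add_apply, Pi.single_eq_same, Pi.single_eq_same, add_sub_right_comm,
        norm_add_sq_real, add_assoc]
    · simp [hm]
  simp only [kmObj, hterm, sum_add_distrib, sum_pi_single', mem_univ, if_true, add_assoc]

theorem wcss_add_single (Y : Fin n → EuclideanSpace ℝ (Fin d)) (c : Fin n → Fin k)
    (i : Fin n) (v : EuclideanSpace ℝ (Fin d)) :
    wcss (Y + Pi.single i v) c = wcss Y c + 2 * ⟪Y i - centroid Y c (c i), v⟫ +
      (1 - (#{m | c m = c i} : ℝ)⁻¹) * ‖v‖ ^ 2 := by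
  set N : ℝ := ((#{m | c m = c i} : ℕ) : ℝ)
  have hN : N ≠ 0 := Nat.cast_ne_zero.2 (card_ne_zero.2 ⟨i, by simp⟩)
  have hshift : ∑ m, ‖centroid (Y + Pi.single i v) c (c m) - centroid Y c (c m)‖ ^ 2 =
      N⁻¹ * ‖v‖ ^ 2 := by
    have hterm : ∀ m, ‖centroid (Y + Pi.single i v) c (c m) - centroid Y c (c m)‖ ^ 2 =
        if c m = c i then N⁻¹ ^ 2 * ‖v‖ ^ 2 else 0 := fun m => by
      rw [centroid_add_single, add_sub_cancel_left]
      split_ifs with h h' h'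
      · rw [norm_smul, mul_pow, Real.norm_eq_abs, sq_abs, h']
      · exact absurd h.symm h'
      · exact absurd h'.symm h
      · simp
    rw [sum_congr rfl fun m _ => hterm m, sum_ite, sum_const_zero, add_zero, sum_const,
      nsmul_eq_mul, sq, ← mul_assoc, ← mul_assoc, mul_inv_cancel₀ hN, one_mul]
  have := kmObj_eq_wcss_add (Y + Pi.single i v) c (centroid Y c)
  rw [kmObj_add_single, hshift] at this
  unfold wcss at *
  linarith

-- The envelope identity `∂ₜ wcss = 2 (t - centroid)` recovers the fitted value from `wcss`.
noncomputable def fittedValuePoly (W : ℝ[X]) : ℝ[X] :=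
  X - C 2⁻¹ * derivative W

section Perturb

variable (X : Fin n → EuclideanSpace ℝ (Fin d)) (i : Fin n) (j : Fin d)

theorem perturbEntry_apply_self_self (t : ℝ) : perturbEntry n d X i j t i j = t := by
  simp [perturbEntry]

theorem perturbEntry_eq_add_single (t : ℝ) :
    perturbEntry n d X i j t =
      perturbEntry n d X i j 0 + Pi.single i (t • EuclideanSpace.single j 1) := by
  ext m : 1
  rcases eq_or_ne m i with rfl | hm
  · simp only [perturbEntry, if_true, Pi.add_apply, Pi.single_eq_same]
    module
  · simp [perturbEntry, hm]

theorem centroid_perturbEntry_apply (c : Fin n → Fin k) (t : ℝ) :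
    centroid (perturbEntry n d X i j t) c (c i) j =
      (#{m | c m = c i} : ℝ)⁻¹ * t + centroid (perturbEntry n d X i j 0) c (c i) j := by
  rw [perturbEntry_eq_add_single, centroid_add_single, if_pos rfl]
  simp [add_comm]

theorem wcss_perturbEntry (c : Fin n → Fin k) (t : ℝ) :
    wcss (perturbEntry n d X i j t) c =
      (1 - (#{m | c m = c i} : ℝ)⁻¹) * t ^ 2
        - 2 * centroid (perturbEntry n d X i j 0) c (c i) j * t
        + wcss (perturbEntry n d X i j 0) c := by
  rw [perturbEntry_eq_add_single X i j t, wcss_add_single, real_inner_smul_right,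
    EuclideanSpace.inner_single_right, norm_smul, PiLp.norm_single]
  simp only [PiLp.sub_apply, perturbEntry_apply_self_self, zero_sub, Real.ringHom_apply, mul_neg,
    one_mul, Real.norm_eq_abs, norm_one, mul_one, sq_abs]
  ring

theorem exists_polynomial_wcss_perturbEntry (c : Fin n → Fin k) :
    ∃ G : ℝ[X], G.natDegree ≤ 2 ∧ ∀ t, G.eval t = wcss (perturbEntry n d X i j t) c ∧
      centroid (perturbEntry n d X i j t) c (c i) j =
        (fittedValuePoly G).eval t := by
  set N : ℝ := ((#{m | c m = c i} : ℕ) : ℝ)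
  set a₀ := centroid (perturbEntry n d X i j 0) c (c i) j
  refine ⟨C (1 - N⁻¹) * Polynomial.X ^ 2 + C (-2 * a₀) * Polynomial.X +
    C (wcss (perturbEntry n d X i j 0) c), natDegree_quadratic_le, fun t => ⟨?_, ?_⟩⟩
  · rw [wcss_perturbEntry X i j c t]
    simp only [eval_add, eval_mul, eval_C, eval_pow, eval_X]
    ring
  · rw [centroid_perturbEntry_apply X i j c t]
    simp only [fittedValuePoly, derivative_add, derivative_C_mul_X_pow, derivative_C_mul_X, derivative_C,
      eval_sub, eval_add, eval_mul, eval_C, eval_X, eval_pow, eval_zero]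
    ring

end Perturb

end KMeans

/-- Finiteness of the k-means discontinuity set: as `X_{i,j}` varies over `ℝ`
with the other entries fixed, any selection `f` of the optimal k-means fitted
value `M(X)_{i,j}` has at most `A` discontinuity points, where `A` does not
depend on `i`, `j`, or the fixed entries. -/
theorem stmt10 (n d k : ℕ) :
    ∃ A : ℕ, ∀ (X : Fin n → EuclideanSpace ℝ (Fin d)) (i : Fin n) (j : Fin d)
      (f : ℝ → ℝ),
      (∀ t : ℝ, ∃ (c : Fin n → Fin k) (μ : Fin k → EuclideanSpace ℝ (Fin d)),
        (∀ (c' : Fin n → Fin k) (μ' : Fin k → EuclideanSpace ℝ (Fin d)),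
          kmObj n d k (perturbEntry n d X i j t) c μ ≤
            kmObj n d k (perturbEntry n d X i j t) c' μ') ∧
        (∀ (m : Fin n) (l : Fin k),
          ‖perturbEntry n d X i j t m - μ (c m)‖ ≤
            ‖perturbEntry n d X i j t m - μ l‖) ∧
        f t = μ (c i) j) →
      {t : ℝ | ¬ ContinuousAt f t}.Finite ∧
        {t : ℝ | ¬ ContinuousAt f t}.ncard ≤ A := by
  refine ⟨Fintype.card (Fin n → Fin k) ^ 2 * 2, fun X i j f hf => ?_⟩
  choose G hdeg hG using KMeans.exists_polynomial_wcss_perturbEntry (k := k) X i j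
  have hsel : ∀ t, ∃ c, (∀ c', (G c).eval t ≤ (G c').eval t) ∧
      f t = (KMeans.fittedValuePoly (G c)).eval t := by
    intro t
    obtain ⟨c, μ, hopt, -, hft⟩ := hf t
    refine ⟨c, fun c' => ?_, ?_⟩
    · rw [(hG c t).1, (hG c' t).1]
      exact KMeans.wcss_le_of_forall_kmObj_le hopt c'
    · rw [hft, KMeans.eq_centroid_of_forall_kmObj_le (fun μ' => hopt c μ') i, (hG c t).2]
  have hsub := setOf_not_continuousAt_subset_crossings G KMeans.fittedValuePoly hsel
  obtain ⟨hfin, hcard⟩ := crossings_finite_and_ncard_le G hdeg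
  exact ⟨hfin.subset hsub, (Set.ncard_le_ncard hsub hfin).trans hcard⟩
end

section
/- For the k-means modelling procedure M on ℝ^{n×d}, viewed as a function of the single entry X_{i,j} with all other entries fixed, there exists a finite set of points outside of which the map X_{i,j} ↦ M(X)_{i,j} is piecewise Lipschitz: the real line decomposes into finitely many open intervals on each of which the map is Lipschitz with constant 1. -/
open Finset

/-- The within-cluster sum of squares of a clustering `(c, μ)` of the rows
`Y` of a data matrix. -/
noncomputable def kmObj' (n d k : ℕ) (Y : Fin n → EuclideanSpace ℝ (Fin d))
    (c : Fin n → Fin k) (μ : Fin k → EuclideanSpace ℝ (Fin d)) : ℝ :=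
  ∑ m : Fin n, ‖Y m - μ (c m)‖ ^ 2

/-- The data matrix `X` with entry `(i, j)` replaced by `t`. -/
noncomputable def perturbEntry' (n d : ℕ) (X : Fin n → EuclideanSpace ℝ (Fin d))
    (i : Fin n) (j : Fin d) (t : ℝ) : Fin n → EuclideanSpace ℝ (Fin d) :=
  fun m => X m + (if m = i then (t - X i j) • EuclideanSpace.single j (1 : ℝ) else 0)

/-!
For a fixed assignment `c`, the optimal centroids are the cluster means, so the fitted value is an
affine function `a_c t + b_c` of the perturbed entry `t`, with `a_c = 1 / N_c` the inverse size of
the cluster of row `i`, and the optimal cost is the quadratic `(1 - a_c) t² - 2 b_c t + const`.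
The exceptional points are the roots of the nonzero differences of these quadratics over all pairs
of assignments. If `c` is optimal at `x`, `c'` at `y`, and no exceptional point lies between them,
the difference of their costs changes sign on `[x, y]` without vanishing there, so it is the zero
polynomial; comparing coefficients, `c` and `c'` have the same fitted affine function, whose slope
is at most `1`.
-/

namespace Polynomial

lemma eq_zero_of_eval_nonpos_of_eval_nonneg {p : ℝ[X]} {x y : ℝ} (hx : p.eval x ≤ 0)
    (hy : 0 ≤ p.eval y) (hroots : ∀ t ∈ Set.uIcc x y, t ∉ p.roots) : p = 0 := by
  by_contra hp
  obtain ⟨t, ht, hpt⟩ :=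
    intermediate_value_uIcc p.continuous.continuousOn (Set.mem_uIcc.2 (Or.inl ⟨hx, hy⟩))
  exact hroots t ht ((mem_roots hp).2 hpt)

end Polynomial

namespace KMeans

section Update

variable {ι α G : Type*} [DecidableEq ι] [AddCommGroup G]

lemma sum_comp_update (s : Finset ι) (g : α → G) (y : ι → α) (i : ι) (w : α) :
    ∑ m ∈ s, g (Function.update y i w m) =
      ∑ m ∈ s, g (y m) + if i ∈ s then g w - g (y i) else 0 := by
  split_ifs with hi
  · change ∑ m ∈ s, (g ∘ Function.update y i w) m = _
    rw [Function.comp_update, sum_update_of_mem hi, sum_eq_add_sum_sdiff_singleton_of_mem hi]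
    simp only [Function.comp_apply]
    abel
  · rw [add_zero]
    exact sum_congr rfl fun m hm => by rw [Function.update_of_ne (ne_of_mem_of_not_mem hm hi)]

lemma sum_update_add (s : Finset ι) (y : ι → G) (i : ι) (v : G) :
    ∑ m ∈ s, Function.update y i (y i + v) m = ∑ m ∈ s, y m + if i ∈ s then v else 0 := by
  simpa using sum_comp_update s id y i (y i + v)

end Update

section Scatter

variable {ι E : Type*} [NormedAddCommGroup E] [InnerProductSpace ℝ E]

noncomputable def mean (s : Finset ι) (y : ι → E) : E := (#s : ℝ)⁻¹ • ∑ m ∈ s, y m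

noncomputable def scatter (s : Finset ι) (y : ι → E) : ℝ := ∑ m ∈ s, ‖y m - mean s y‖ ^ 2

lemma card_smul_mean (s : Finset ι) (y : ι → E) : (#s : ℝ) • mean s y = ∑ m ∈ s, y m := by
  rcases s.eq_empty_or_nonempty with rfl | hs
  · simp
  · rw [mean, smul_inv_smul₀ (by positivity)]

lemma sum_sub_mean (s : Finset ι) (y : ι → E) : ∑ m ∈ s, (y m - mean s y) = 0 := by
  rw [sum_sub_distrib, sum_const, ← Nat.cast_smul_eq_nsmul ℝ, card_smul_mean, sub_self]

lemma sum_norm_sub_sq (s : Finset ι) (y : ι → E) (v : E) :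
    ∑ m ∈ s, ‖y m - v‖ ^ 2 = scatter s y + #s * ‖mean s y - v‖ ^ 2 := by
  have h m : y m - v = (y m - mean s y) + (mean s y - v) := by abel
  simp only [h, norm_add_sq_real, sum_add_distrib, ← mul_sum, ← sum_inner, sum_sub_mean,
    inner_zero_left, mul_zero, add_zero, sum_const, nsmul_eq_mul, scatter]

lemma scatter_eq_sum_norm_sq_sub (s : Finset ι) (y : ι → E) :
    scatter s y = ∑ m ∈ s, ‖y m‖ ^ 2 - ‖∑ m ∈ s, y m‖ ^ 2 / #s := by
  have h := sum_norm_sub_sq s y 0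
  simp only [sub_zero] at h
  rw [h, ← card_smul_mean, norm_smul, mul_pow]
  rcases s.eq_empty_or_nonempty with rfl | hs
  · simp
  · field_simp
    simp only [Real.norm_natCast]
    ring

variable [DecidableEq ι]

lemma mean_update_add (s : Finset ι) (y : ι → E) (i : ι) (v : E) :
    mean s (Function.update y i (y i + v)) =
      mean s y + if i ∈ s then (#s : ℝ)⁻¹ • v else 0 := by
  rw [mean, mean, sum_update_add, smul_add, smul_ite, smul_zero]

lemma scatter_update_add (s : Finset ι) (y : ι → E) (i : ι) (v : E) :
    scatter s (Function.update y i (y i + v)) = scatter s y +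
      if i ∈ s then 2 * inner ℝ (y i - mean s y) v + (1 - (#s : ℝ)⁻¹) * ‖v‖ ^ 2 else 0 := by
  rw [scatter_eq_sum_norm_sq_sub, scatter_eq_sum_norm_sq_sub, sum_update_add,
    sum_comp_update s (‖·‖ ^ 2)]
  split_ifs with hi
  · have hs : (#s : ℝ) ≠ 0 := by have := card_pos.2 ⟨i, hi⟩; positivity
    rw [mean, inner_sub_left, real_inner_smul_left, sum_inner, norm_add_sq_real, norm_add_sq_real,
      real_inner_comm, ← sum_inner]
    field_simp
    ring
  · simp

end Scatter

section Clustering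

variable {n d k : ℕ}

def cluster (c : Fin n → Fin k) (l : Fin k) : Finset (Fin n) := {m | c m = l}

lemma mem_cluster {c : Fin n → Fin k} {l : Fin k} {m : Fin n} :
    m ∈ cluster c l ↔ c m = l := by
  simp [cluster]

noncomputable def centroids (Y : Fin n → EuclideanSpace ℝ (Fin d)) (c : Fin n → Fin k)
    (l : Fin k) : EuclideanSpace ℝ (Fin d) :=
  mean (cluster c l) Y

noncomputable def withinSS (Y : Fin n → EuclideanSpace ℝ (Fin d)) (c : Fin n → Fin k) : ℝ :=
  ∑ l, scatter (cluster c l) Y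

def IsOptimal (Y : Fin n → EuclideanSpace ℝ (Fin d)) (c : Fin n → Fin k)
    (μ : Fin k → EuclideanSpace ℝ (Fin d)) : Prop :=
  ∀ c' μ', kmObj' n d k Y c μ ≤ kmObj' n d k Y c' μ'

variable (Y : Fin n → EuclideanSpace ℝ (Fin d)) (c : Fin n → Fin k)

lemma kmObj'_eq_withinSS_add (μ : Fin k → EuclideanSpace ℝ (Fin d)) :
    kmObj' n d k Y c μ =
      withinSS Y c + ∑ l, #(cluster c l) * ‖centroids Y c l - μ l‖ ^ 2 := by
  rw [kmObj', ← sum_fiberwise univ c, withinSS, ← sum_add_distrib]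
  refine sum_congr rfl fun l _ => ?_
  rw [centroids, ← sum_norm_sub_sq, cluster]
  exact sum_congr rfl fun m hm => by rw [(mem_filter.1 hm).2]

lemma withinSS_le_kmObj' (μ : Fin k → EuclideanSpace ℝ (Fin d)) :
    withinSS Y c ≤ kmObj' n d k Y c μ := by
  rw [kmObj'_eq_withinSS_add]
  exact le_add_of_nonneg_right (sum_nonneg fun l _ => by positivity)

lemma kmObj'_centroids : kmObj' n d k Y c (centroids Y c) = withinSS Y c := by
  simp [kmObj'_eq_withinSS_add]

lemma apply_eq_centroids_of_kmObj'_le {μ : Fin k → EuclideanSpace ℝ (Fin d)}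
    (h : kmObj' n d k Y c μ ≤ withinSS Y c) (m : Fin n) : μ (c m) = centroids Y c (c m) := by
  rw [kmObj'_eq_withinSS_add] at h
  have hsum : ∑ l, (#(cluster c l) : ℝ) * ‖centroids Y c l - μ l‖ ^ 2 = 0 :=
    le_antisymm (by linarith) (sum_nonneg fun l _ => by positivity)
  have hzero := (sum_eq_zero_iff_of_nonneg fun l _ => by positivity).1 hsum (c m) (mem_univ _)
  have hcard : (0 : ℝ) < #(cluster c (c m)) := by
    exact_mod_cast card_pos.2 ⟨m, mem_cluster.2 rfl⟩
  rw [mul_eq_zero, or_iff_right hcard.ne', sq_eq_zero_iff, norm_eq_zero, sub_eq_zero] at hzero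
  exact hzero.symm

variable {Y c} {μ : Fin k → EuclideanSpace ℝ (Fin d)}

lemma IsOptimal.withinSS_le (h : IsOptimal Y c μ) (c' : Fin n → Fin k) :
    withinSS Y c ≤ withinSS Y c' :=
  (withinSS_le_kmObj' Y c μ).trans <| (h c' (centroids Y c')).trans_eq (kmObj'_centroids Y c')

lemma IsOptimal.apply_eq_centroids (h : IsOptimal Y c μ) (m : Fin n) :
    μ (c m) = centroids Y c (c m) :=
  apply_eq_centroids_of_kmObj'_le Y c ((h c _).trans_eq (kmObj'_centroids Y c)) m

end Clustering

section OneEntry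

variable {n d k : ℕ} (X : Fin n → EuclideanSpace ℝ (Fin d)) (i : Fin n) (j : Fin d)

lemma perturbEntry'_zero_apply_self : perturbEntry' n d X i j 0 i j = 0 := by
  simp [perturbEntry']

lemma perturbEntry'_eq_update (t : ℝ) :
    perturbEntry' n d X i j t = Function.update (perturbEntry' n d X i j 0) i
      (perturbEntry' n d X i j 0 i + t • EuclideanSpace.single j 1) := by
  funext m
  rcases eq_or_ne m i with rfl | hm
  · simp only [perturbEntry', Function.update_self, if_true]
    module
  · simp [perturbEntry', hm]

noncomputable def fittedSlope (c : Fin n → Fin k) : ℝ := (#(cluster c (c i)) : ℝ)⁻¹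

noncomputable def fittedIntercept (c : Fin n → Fin k) : ℝ :=
  centroids (perturbEntry' n d X i j 0) c (c i) j

variable (c : Fin n → Fin k)

lemma centroids_perturbEntry'_apply (t : ℝ) :
    centroids (perturbEntry' n d X i j t) c (c i) j =
      fittedSlope i c * t + fittedIntercept X i j c := by
  rw [perturbEntry'_eq_update, centroids, mean_update_add, if_pos (mem_cluster.2 rfl)]
  simp only [PiLp.add_apply, PiLp.smul_apply, PiLp.single_eq_same, smul_eq_mul, mul_one,
    fittedSlope, fittedIntercept, centroids]
  ring

lemma withinSS_perturbEntry' (t : ℝ) :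
    withinSS (perturbEntry' n d X i j t) c = (1 - fittedSlope i c) * t ^ 2
      - 2 * fittedIntercept X i j c * t + withinSS (perturbEntry' n d X i j 0) c := by
  simp only [withinSS, perturbEntry'_eq_update X i j t, scatter_update_add, sum_add_distrib,
    mem_cluster, sum_ite_eq, mem_univ, if_true]
  simp only [inner_sub_left, real_inner_smul_right, EuclideanSpace.inner_single_right,
    perturbEntry'_zero_apply_self, Real.ringHom_apply, mul_zero, one_mul, zero_sub, mul_neg,
    norm_smul, Real.norm_eq_abs, PiLp.norm_single, norm_one, mul_one, sq_abs, fittedSlope,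
    fittedIntercept, centroids]
  ring

lemma IsOptimal.apply_eq_fitted {t : ℝ} {μ : Fin k → EuclideanSpace ℝ (Fin d)}
    (h : IsOptimal (perturbEntry' n d X i j t) c μ) :
    μ (c i) j = fittedSlope i c * t + fittedIntercept X i j c := by
  rw [h.apply_eq_centroids, centroids_perturbEntry'_apply]

lemma fittedSlope_pos : 0 < fittedSlope i c :=
  inv_pos.2 (Nat.cast_pos.2 (card_pos.2 ⟨i, mem_cluster.2 rfl⟩))

lemma fittedSlope_le_one : fittedSlope i c ≤ 1 :=
  inv_le_one_of_one_le₀ (Nat.one_le_cast.2 (card_pos.2 ⟨i, mem_cluster.2 rfl⟩))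

noncomputable def withinSSPoly : Polynomial ℝ :=
  Polynomial.C (1 - fittedSlope i c) * Polynomial.X ^ 2
    - Polynomial.C (2 * fittedIntercept X i j c) * Polynomial.X
    + Polynomial.C (withinSS (perturbEntry' n d X i j 0) c)

lemma eval_withinSSPoly (t : ℝ) :
    (withinSSPoly X i j c).eval t = withinSS (perturbEntry' n d X i j t) c := by
  rw [withinSS_perturbEntry']
  simp [withinSSPoly]

lemma fitted_eq_of_withinSSPoly_eq {c' : Fin n → Fin k}
    (h : withinSSPoly X i j c = withinSSPoly X i j c') :
    fittedSlope i c = fittedSlope i c' ∧ fittedIntercept X i j c = fittedIntercept X i j c' := by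
  have h2 := congrArg (Polynomial.coeff · 2) h
  have h1 := congrArg (Polynomial.coeff · 1) h
  simp only [withinSSPoly, Polynomial.coeff_add, Polynomial.coeff_sub, Polynomial.coeff_C_mul,
    Polynomial.coeff_X_pow, Polynomial.coeff_X, Polynomial.coeff_C] at h1 h2
  norm_num at h1 h2
  exact ⟨h2, h1⟩

end OneEntry

end KMeans

open KMeans

/-- Piecewise Lipschitz structure of the k-means fitted value as a function of
a single entry: there is a finite set of points outside of which the map
`X_{i,j} ↦ M(X)_{i,j}` is Lipschitz with constant 1, i.e. the real line
decomposes into finitely many open intervals on each of which the map is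
1-Lipschitz. -/
theorem stmt19 (n d k : ℕ) (X : Fin n → EuclideanSpace ℝ (Fin d))
    (i : Fin n) (j : Fin d) (f : ℝ → ℝ)
    (hf : ∀ t : ℝ, ∃ (c : Fin n → Fin k) (μ : Fin k → EuclideanSpace ℝ (Fin d)),
      (∀ (c' : Fin n → Fin k) (μ' : Fin k → EuclideanSpace ℝ (Fin d)),
        kmObj' n d k (perturbEntry' n d X i j t) c μ ≤
          kmObj' n d k (perturbEntry' n d X i j t) c' μ') ∧
      (∀ (m : Fin n) (l : Fin k),
        ‖perturbEntry' n d X i j t m - μ (c m)‖ ≤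
          ‖perturbEntry' n d X i j t m - μ l‖) ∧
      f t = μ (c i) j) :
    ∃ F : Finset ℝ, ∀ x y : ℝ, (∀ t ∈ Set.uIcc x y, t ∉ F) →
      |f x - f y| ≤ 1 * |x - y| := by
  refine ⟨univ.biUnion fun q : (Fin n → Fin k) × (Fin n → Fin k) =>
    (withinSSPoly X i j q.1 - withinSSPoly X i j q.2).roots.toFinset, fun x y hxy => ?_⟩
  obtain ⟨c, μ, hx : IsOptimal _ c μ, -, hfx⟩ := hf x
  obtain ⟨c', μ', hy : IsOptimal _ c' μ', -, hfy⟩ := hf y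
  have hroots : ∀ t ∈ Set.uIcc x y, t ∉ (withinSSPoly X i j c - withinSSPoly X i j c').roots :=
    fun t ht hroot => hxy t ht (mem_biUnion.2 ⟨(c, c'), mem_univ _, Multiset.mem_toFinset.2 hroot⟩)
  have hpoly : withinSSPoly X i j c = withinSSPoly X i j c' := by
    refine sub_eq_zero.1 (Polynomial.eq_zero_of_eval_nonpos_of_eval_nonneg ?_ ?_ hroots)
    · simpa [eval_withinSSPoly] using hx.withinSS_le c'
    · simpa [eval_withinSSPoly] using hy.withinSS_le c
  obtain ⟨hslope, hintercept⟩ := fitted_eq_of_withinSSPoly_eq X i j c hpoly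
  rw [hfx, hfy, hx.apply_eq_fitted, hy.apply_eq_fitted, hslope, hintercept,
    add_sub_add_right_eq_sub, ← mul_sub, abs_mul, abs_of_pos (fittedSlope_pos i c')]
  exact mul_le_mul_of_nonneg_right (fittedSlope_le_one i c') (abs_nonneg _)
end
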